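/- Let k ≥ 0 and let h_k : ℝ → ℝ^{2k+1} be the generalized helix h_k(t) = (t, cos t, sin t, cos 2t, sin 2t, …, cos kt, sin kt). Define F(t) = ‖h_k(t) − c‖² − r² for a fixed center c ∈ ℝ^{2k+1} and radius r. Then F''(t) is an affine function plus a trigonometric polynomial of degree at most k in t; in particular F'' has at most 2k zeros in the open interval (0, 2π) unless it is identically zero. -/

import Mathlib

open Real

/-- The generalized helix `h_k(t) = (t, cos t, sin t, …, cos kt, sin kt) ∈ ℝ^{2k+1}`. -/
noncomputable def genHelix (k : ℕ) (t : ℝ) : EuclideanSpace ℝ (Fin (2 * k + 1)) :=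
  WithLp.toLp 2 fun (i : Fin (2 * k + 1)) =>
    if (i : ℕ) = 0 then t
    else if (i : ℕ) % 2 = 1 then Real.cos ((((i : ℕ) + 1) / 2 : ℕ) * t)
    else Real.sin ((((i : ℕ)) / 2 : ℕ) * t)


lemma key2 (A B x y : ℝ) :
    ((A : ℂ) - B * Complex.I)/2 * Complex.exp ((↑(y + x)) * Complex.I)
      + ((A : ℂ) + B * Complex.I)/2 * Complex.exp ((↑(y - x)) * Complex.I)
      = Complex.exp (↑y * Complex.I) * ((A * Real.cos x + B * Real.sin x : ℝ) : ℂ) := by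
  rw [show ((y+x : ℝ):ℂ) * Complex.I = ↑y*Complex.I + ↑x*Complex.I by push_cast; ring,
    show ((y-x:ℝ):ℂ)*Complex.I = ↑y*Complex.I + ↑(-x)*Complex.I by push_cast; ring,
    Complex.exp_add, Complex.exp_add]
  simp only [Complex.exp_mul_I, Complex.ofReal_neg, Complex.cos_neg, Complex.sin_neg]
  push_cast
  try simp only [Complex.ofReal_cos, Complex.ofReal_sin]
  linear_combination (-((Complex.cos (y:ℂ) + Complex.sin (y:ℂ) * Complex.I)) * (B:ℂ) * Complex.sin (x:ℂ)) * Complex.I_sq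

lemma f_exp (t : ℝ) (ht : t ∈ Set.Ioo 0 (2*π)) :
    (if Complex.arg (Complex.exp (↑t*Complex.I)) ≤ 0
      then Complex.arg (Complex.exp (↑t*Complex.I)) + 2*π
      else Complex.arg (Complex.exp (↑t*Complex.I))) = t := by
  obtain ⟨ht1, ht2⟩ := ht
  rcases le_or_gt t π with h | h
  · have harg : Complex.arg (Complex.exp (↑t*Complex.I)) = t := by
      rw [Complex.exp_mul_I]
      exact Complex.arg_cos_add_sin_mul_I ⟨by linarith [Real.pi_pos], h⟩
    rw [harg, if_neg (not_le.mpr ht1)]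
  · have hexp : Complex.exp (↑t*Complex.I) = Complex.exp (↑(t - 2*π)*Complex.I) := by
      rw [show (↑t*Complex.I : ℂ) = ↑(t-2*π)*Complex.I + 2*π*Complex.I by push_cast; ring,
        Complex.exp_add, Complex.exp_two_pi_mul_I, mul_one]
    have harg : Complex.arg (Complex.exp (↑t*Complex.I)) = t - 2*π := by
      rw [hexp, Complex.exp_mul_I]
      exact Complex.arg_cos_add_sin_mul_I ⟨by linarith, by linarith [Real.pi_pos]⟩
    rw [harg, if_pos (by linarith [Real.pi_pos])]; ring

lemma trig_zeros (k : ℕ) (A B : ℕ → ℝ) (φ : ℝ → ℝ)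
    (hφ : ∀ t, φ t = 2 + ∑ j ∈ Finset.Icc 1 k, (A j * Real.cos (j*t) + B j * Real.sin (j*t))) :
    ∃ s : Finset ℝ, s.card ≤ 2*k ∧ ∀ t ∈ Set.Ioo (0:ℝ) (2*π), φ t = 0 → t ∈ s := by
  set P : Polynomial ℂ := Polynomial.C 2 * Polynomial.X ^ k
    + ∑ j ∈ Finset.Icc 1 k,
      (Polynomial.C (((A j : ℂ) - B j * Complex.I)/2) * Polynomial.X ^ (k+j)
        + Polynomial.C (((A j : ℂ) + B j * Complex.I)/2) * Polynomial.X ^ (k-j)) with hP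
  have hcoeff : P.coeff k = 2 := by
    rw [hP, Polynomial.coeff_add, Polynomial.finset_sum_coeff]
    rw [Finset.sum_eq_zero (fun j hj => ?_)]
    · simp [Polynomial.coeff_C_mul, Polynomial.coeff_X_pow]
    · simp only [Finset.mem_Icc] at hj
      have h1 : k ≠ k + j := by omega
      have h2 : k ≠ k - j := by omega
      simp [Polynomial.coeff_C_mul, Polynomial.coeff_X_pow, h1, h2, show j ≠ 0 by omega]
  have hP0 : P ≠ 0 := by
    intro h
    rw [h] at hcoeff
    simp at hcoeff
  have hdeg : P.natDegree ≤ 2*k := by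
    apply le_trans (Polynomial.natDegree_add_le _ _)
    rw [max_le_iff]
    constructor
    · exact le_trans (Polynomial.natDegree_C_mul_X_pow_le _ _) (by omega)
    · apply Polynomial.natDegree_sum_le_of_forall_le
      intro j hj
      simp only [Finset.mem_Icc] at hj
      apply le_trans (Polynomial.natDegree_add_le _ _)
      rw [max_le_iff]
      exact ⟨le_trans (Polynomial.natDegree_C_mul_X_pow_le _ _) (by omega),
        le_trans (Polynomial.natDegree_C_mul_X_pow_le _ _) (by omega)⟩
  have heval : ∀ t : ℝ, P.eval (Complex.exp (↑t*Complex.I))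
      = Complex.exp (↑((k:ℝ)*t) * Complex.I) * ((φ t : ℝ) : ℂ) := by
    intro t
    rw [hP, hφ t]
    simp only [Polynomial.eval_add, Polynomial.eval_mul, Polynomial.eval_pow,
      Polynomial.eval_C, Polynomial.eval_X, Polynomial.eval_finset_sum]
    rw [Complex.ofReal_add, Complex.ofReal_sum, Complex.ofReal_ofNat, mul_add, Finset.mul_sum]
    congr 1
    · rw [← Complex.exp_nat_mul]
      rw [show ((k:ℂ) * (↑t*Complex.I)) = ↑((k:ℝ)*t) * Complex.I by push_cast; ring]
      ring
    · apply Finset.sum_congr rfl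
      intro j hj
      simp only [Finset.mem_Icc] at hj
      rw [← Complex.exp_nat_mul, ← Complex.exp_nat_mul]
      rw [show (((k+j:ℕ):ℂ) * (↑t*Complex.I)) = ↑((k:ℝ)*t + (j:ℝ)*t) * Complex.I by
          push_cast; ring,
        show (((k-j:ℕ):ℂ) * (↑t*Complex.I)) = ↑((k:ℝ)*t - (j:ℝ)*t) * Complex.I by
          push_cast [Nat.cast_sub hj.2]; ring]
      exact key2 (A j) (B j) ((j:ℝ)*t) ((k:ℝ)*t)
  refine ⟨P.roots.toFinset.image (fun z =>
      if Complex.arg z ≤ 0 then Complex.arg z + 2*π else Complex.arg z), ?_, ?_⟩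
  · exact le_trans Finset.card_image_le (le_trans (Multiset.toFinset_card_le _)
      (le_trans P.card_roots' hdeg))
  · intro t ht h0
    have hroot : Complex.exp (↑t*Complex.I) ∈ P.roots := by
      rw [Polynomial.mem_roots hP0]
      rw [Polynomial.IsRoot, heval t, h0]
      simp
    exact Finset.mem_image.mpr ⟨_, Multiset.mem_toFinset.mpr hroot, f_exp t ht⟩


lemma sum_reindex (k : ℕ) (g : ℕ → ℝ) :
    ∑ i ∈ Finset.range (2*k+1), g i
      = g 0 + ∑ j ∈ Finset.Icc 1 k, (g (2*j-1) + g (2*j)) := by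
  induction k with
  | zero => simp
  | succ n ih =>
    have h1 : 2*(n+1)+1 = (2*n+1) + 1 + 1 := by ring
    rw [h1, Finset.sum_range_succ, Finset.sum_range_succ, ih]
    have h2 : Finset.Icc 1 (n+1) = insert (n+1) (Finset.Icc 1 n) := by
      ext x; simp [Finset.mem_Icc]; omega
    rw [h2, Finset.sum_insert (by simp)]
    have e1 : 2*(n+1)-1 = 2*n+1 := by omega
    have e2 : 2*(n+1) = 2*n+1+1 := by omega
    rw [e1, e2]; ring

lemma part1 (k : ℕ) (c : EuclideanSpace ℝ (Fin (2 * k + 1))) (r : ℝ)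
    (F : ℝ → ℝ) (hF : F = fun t => ‖genHelix k t - c‖ ^ 2 - r ^ 2) :
    ∃ A B : ℕ → ℝ, ∀ t : ℝ,
      iteratedDeriv 2 F t = 2 + ∑ j ∈ Finset.Icc 1 k,
        (A j * Real.cos (j * t) + B j * Real.sin (j * t)) := by
  set C : ℕ → ℝ := fun n => if h : n < 2*k+1 then c ⟨n, h⟩ else 0 with hC
  set H : ℝ → ℕ → ℝ := fun t n => if n = 0 then t else if n % 2 = 1 then
      Real.cos (((n+1)/2 : ℕ) * t) else Real.sin ((n/2 : ℕ) * t) with hH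
  set a : ℕ → ℝ := fun j => C (2*j-1) with ha
  set b : ℕ → ℝ := fun j => C (2*j) with hb
  set K : ℝ := C 0^2 - r^2 + ∑ j ∈ Finset.Icc 1 k, (1 + a j^2 + b j^2) with hK
  set G : ℝ → ℝ := fun t => t^2 + (-2*C 0)*t + K
      + ∑ j ∈ Finset.Icc 1 k, ((-2*a j) * Real.cos (j*t) + (-2*b j) * Real.sin (j*t)) with hG
  have hFG : F = G := by
    funext t
    rw [hF]
    show ‖genHelix k t - c‖ ^ 2 - r ^ 2 = G t
    have hnorm : ‖genHelix k t - c‖ ^ 2 = ∑ i, (genHelix k t i - c i)^2 := by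
      rw [EuclideanSpace.norm_eq, Real.sq_sqrt (by positivity)]
      simp [sq_abs]
    have hsum : ∑ i, (genHelix k t i - c i)^2
        = ∑ n ∈ Finset.range (2*k+1), (H t n - C n)^2 := by
      rw [← Fin.sum_univ_eq_sum_range (fun n => (H t n - C n)^2) (2*k+1)]
      apply Finset.sum_congr rfl
      intro i _
      have h1 : genHelix k t i = H t i := by simp [genHelix, hH]
      have h2 : C i = c i := by simp [hC, i.isLt, show ¬ (2*k < (i:ℕ)) by have := i.isLt; omega]
      rw [h1, h2]
    rw [hnorm, hsum, sum_reindex]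
    have hH0 : H t 0 = t := rfl
    have hterm : ∀ j ∈ Finset.Icc 1 k,
        (H t (2*j-1) - C (2*j-1))^2 + (H t (2*j) - C (2*j))^2
          = (1 + a j^2 + b j^2) + ((-2*a j) * Real.cos (j*t) + (-2*b j) * Real.sin (j*t)) := by
      intro j hj
      simp only [Finset.mem_Icc] at hj
      have e0 : ¬(2*j-1 = 0) := by omega
      have e1 : (2*j-1) % 2 = 1 := by omega
      have e2 : (2*j-1+1)/2 = j := by omega
      have e3 : ¬(2*j = 0) := by omega
      have e4 : ¬(2*j % 2 = 1) := by omega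
      have e5 : (2*j)/2 = j := by omega
      have hc : H t (2*j-1) = Real.cos (j*t) := by simp [hH, e0, e1, e2]
      have hs : H t (2*j) = Real.sin (j*t) := by simp [hH, e3, e4, e5]
      rw [hc, hs]
      have h1 : C (2*j-1) = a j := rfl
      have h2 : C (2*j) = b j := rfl
      rw [h1, h2]
      nlinarith [Real.sin_sq_add_cos_sq ((j:ℝ)*t)]
    rw [Finset.sum_congr rfl hterm, Finset.sum_add_distrib]
    simp only [hG, hH0, hK]
    ring
  -- derivatives
  have hder1 : ∀ j ∈ Finset.Icc 1 k, ∀ t : ℝ,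
      HasDerivAt (fun t => (-2*a j) * Real.cos ((j:ℝ)*t) + (-2*b j) * Real.sin ((j:ℝ)*t))
        (2*a j*j * Real.sin ((j:ℝ)*t) + (-2*b j*j) * Real.cos ((j:ℝ)*t)) t := by
    intro j _ t
    have hj : HasDerivAt (fun t : ℝ => (j:ℝ)*t) j t := by
      simpa using (hasDerivAt_id t).const_mul (j:ℝ)
    have hc : HasDerivAt (fun t : ℝ => Real.cos ((j:ℝ)*t)) (-Real.sin ((j:ℝ)*t) * j) t :=
      (Real.hasDerivAt_cos ((j:ℝ)*t)).comp t hj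
    have hs : HasDerivAt (fun t : ℝ => Real.sin ((j:ℝ)*t)) (Real.cos ((j:ℝ)*t) * j) t :=
      (Real.hasDerivAt_sin ((j:ℝ)*t)).comp t hj
    have := (hc.const_mul (-2*a j)).add (hs.const_mul (-2*b j))
    exact this.congr_deriv (by ring)
  set G1 : ℝ → ℝ := fun t => 2*t + (-2*C 0)
      + ∑ j ∈ Finset.Icc 1 k, (2*a j*j * Real.sin ((j:ℝ)*t) + (-2*b j*j) * Real.cos ((j:ℝ)*t)) with hG1d
  have hGd : ∀ t : ℝ, HasDerivAt G (G1 t) t := by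
    intro t
    have h1 : HasDerivAt (fun t : ℝ => t^2) (2*t) t := by simpa using hasDerivAt_pow 2 t
    have h2 : HasDerivAt (fun t : ℝ => (-2*C 0)*t) (-2*C 0) t := by
      simpa using (hasDerivAt_id t).const_mul (-2*C 0)
    exact ((h1.add h2).add_const K).add (HasDerivAt.fun_sum (fun j hj => hder1 j hj t))
  set G2 : ℝ → ℝ := fun t => 2
      + ∑ j ∈ Finset.Icc 1 k, (2*a j*j*j * Real.cos ((j:ℝ)*t) + 2*b j*j*j * Real.sin ((j:ℝ)*t)) with hG2d
  have hG1d' : ∀ t : ℝ, HasDerivAt G1 (G2 t) t := by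
    intro t
    have h1 : HasDerivAt (fun t : ℝ => 2*t) 2 t := by
      simpa using (hasDerivAt_id t).const_mul (2:ℝ)
    have h3 : ∀ j ∈ Finset.Icc 1 k,
        HasDerivAt (fun t => 2*a j*j * Real.sin ((j:ℝ)*t) + (-2*b j*j) * Real.cos ((j:ℝ)*t))
          (2*a j*j*j * Real.cos ((j:ℝ)*t) + 2*b j*j*j * Real.sin ((j:ℝ)*t)) t := by
      intro j _
      have hj : HasDerivAt (fun t : ℝ => (j:ℝ)*t) j t := by
        simpa using (hasDerivAt_id t).const_mul (j:ℝ)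
      have hc : HasDerivAt (fun t : ℝ => Real.cos ((j:ℝ)*t)) (-Real.sin ((j:ℝ)*t) * j) t :=
        (Real.hasDerivAt_cos ((j:ℝ)*t)).comp t hj
      have hs : HasDerivAt (fun t : ℝ => Real.sin ((j:ℝ)*t)) (Real.cos ((j:ℝ)*t) * j) t :=
        (Real.hasDerivAt_sin ((j:ℝ)*t)).comp t hj
      have := (hs.const_mul (2*a j*j)).add (hc.const_mul (-2*b j*j))
      exact this.congr_deriv (by ring)
    exact (h1.add_const (-2*C 0)).add (HasDerivAt.fun_sum h3)
  have hderivG : deriv G = G1 := funext fun t => (hGd t).deriv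
  have hderivG1 : deriv G1 = G2 := funext fun t => (hG1d' t).deriv
  refine ⟨fun j => 2*a j*j*j, fun j => 2*b j*j*j, fun t => ?_⟩
  rw [show (2:ℕ) = 0 + 1 + 1 from rfl, iteratedDeriv_succ, iteratedDeriv_succ, iteratedDeriv_zero,
    hFG, hderivG, hderivG1]

/-- For `F(t) = ‖h_k(t) − c‖² − r²`, the second derivative `F''` is an affine
function plus a trigonometric polynomial of degree at most `k`; in particular
`F''` has at most `2k` zeros in `(0, 2π)` unless it vanishes identically there. -/
theorem stmt_13 (k : ℕ) (c : EuclideanSpace ℝ (Fin (2 * k + 1))) (r : ℝ)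
    (F : ℝ → ℝ) (hF : F = fun t => ‖genHelix k t - c‖ ^ 2 - r ^ 2) :
    (∃ (p q : ℝ) (A B : ℕ → ℝ), ∀ t : ℝ,
      iteratedDeriv 2 F t = p + q * t + ∑ j ∈ Finset.Icc 1 k,
        (A j * Real.cos (j * t) + B j * Real.sin (j * t))) ∧
    (¬ (∀ t ∈ Set.Ioo (0 : ℝ) (2 * π), iteratedDeriv 2 F t = 0) →
      ∃ s : Finset ℝ, s.card ≤ 2 * k ∧
        ∀ t ∈ Set.Ioo (0 : ℝ) (2 * π), iteratedDeriv 2 F t = 0 → t ∈ s) := by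
  obtain ⟨A, B, hAB⟩ := part1 k c r F hF
  constructor
  · exact ⟨2, 0, A, B, fun t => by rw [hAB t]; ring⟩
  · intro _
    exact trig_zeros k A B (iteratedDeriv 2 F) hAB
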